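/- arXiv:1206.4207 — 3 statements merged into one kernel-verified Lean document; each statement's English description precedes it below -/
import Mathlib

section
/- Let X be a smooth manifold (finite-dimensional, Hausdorff, second countable, without boundary) and let I be an ideal of the commutative ring C∞(X,ℝ). Let n ∈ ℕ, let f : ℝⁿ → ℝ be smooth, and let c₁,…,cₙ, c′₁,…,c′ₙ ∈ C∞(X,ℝ) satisfy cᵢ − c′ᵢ ∈ I for i = 1,…,n. Then the smooth function x ↦ f(c₁(x),…,cₙ(x)) − f(c′₁(x),…,c′ₙ(x)) belongs to I. Consequently the n-fold operation (c₁+I,…,cₙ+I) ↦ (x ↦ f(c₁(x),…,cₙ(x))) + I on the quotient ring C∞(X,ℝ)/I is well defined. -/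
open scoped Manifold


open MeasureTheory Convolution Set
open scoped ContDiff

/-- a fixed smooth bump function on ℝ equal to 1 on [0,1], supported in ball (1/2) 1. -/
noncomputable def myBump : ContDiffBump (2⁻¹ : ℝ) := ⟨2⁻¹, 1, by norm_num, by norm_num⟩

/-- Smoothness of a parametric interval integral, via convolution theory. -/
lemma contDiff_parametric_integral {P : Type*} [NormedAddCommGroup P] [NormedSpace ℝ P]
    (H : P × ℝ → ℝ) (hH : ContDiff ℝ ∞ H) :
    ContDiff ℝ ∞ fun p : P => ∫ t in (0:ℝ)..1, H (p, t) := by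
  set g : P → ℝ → ℝ := fun p t => myBump t * H (p, t) with hg_def
  set f : ℝ → ℝ := Set.indicator (Set.Icc (-1:ℝ) 0) 1 with hf_def
  have hf : LocallyIntegrable f volume := by
    apply Integrable.locallyIntegrable
    rw [hf_def, integrable_indicator_iff measurableSet_Icc]
    exact integrableOn_const (by simp) (by simp)
  have hgs : ∀ p x, p ∈ (univ : Set P) → x ∉ Set.Icc (-(2:ℝ)) 2 → g p x = 0 := by
    intro p x _ hx
    have : myBump x = 0 := by
      apply myBump.zero_of_le_dist
      simp only [myBump, Real.dist_eq]
      rw [Set.mem_Icc, not_and_or] at hx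
      rcases hx with h | h <;> push_neg at h <;> rw [le_abs] <;>
        [exact Or.inr (by linarith); exact Or.inl (by linarith)]
    simp [hg_def, this]
  have hg : ContDiffOn ℝ ∞ (Function.uncurry g) ((univ : Set P) ×ˢ (univ : Set ℝ)) := by
    apply ContDiff.contDiffOn
    exact (myBump.contDiff.comp contDiff_snd).mul hH
  have key := contDiffOn_convolution_right_with_param (ContinuousLinearMap.mul ℝ ℝ)
    isOpen_univ (isCompact_Icc (a := -(2:ℝ)) (b := 2)) hgs hf hg
  rw [Set.univ_prod_univ, contDiffOn_univ] at key
  have key2 : ContDiff ℝ ∞ fun p : P => (f ⋆[ContinuousLinearMap.mul ℝ ℝ, volume] g p) 0 :=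
    key.comp (contDiff_id.prodMk contDiff_const)
  convert key2 using 2 with p
  rw [convolution_def]
  have step1 : ∀ t : ℝ, (ContinuousLinearMap.mul ℝ ℝ) (f t) (g p (0 - t))
      = Set.indicator (Set.Icc (-1:ℝ) 0) (fun t => g p (-t)) t := by
    intro t
    simp only [ContinuousLinearMap.mul_apply', hf_def, zero_sub, Set.indicator]
    split_ifs <;> simp
  rw [MeasureTheory.integral_congr_ae (Filter.Eventually.of_forall step1),
    integral_indicator measurableSet_Icc]
  rw [MeasureTheory.integral_Icc_eq_integral_Ioc,
    ← intervalIntegral.integral_of_le (by norm_num : (-1:ℝ) ≤ 0)]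
  rw [intervalIntegral.integral_comp_neg (fun t => g p t)]
  norm_num
  apply intervalIntegral.integral_congr
  intro t ht
  rw [Set.uIcc_of_le (by norm_num : (0:ℝ) ≤ 1)] at ht
  have : myBump t = 1 := by
    apply myBump.one_of_mem_closedBall
    simp only [myBump, Real.closedBall_eq_Icc]
    constructor <;> [linarith [ht.1]; linarith [ht.2]] 
  simp [hg_def, this]

/-- **Hadamard's lemma**. -/
lemma hadamard (n : ℕ) (f : (Fin n → ℝ) → ℝ) (hf : ContDiff ℝ (⊤ : ℕ∞) f) :
    ∃ g : Fin n → ((Fin n → ℝ) × (Fin n → ℝ)) → ℝ,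
      (∀ i, ContDiff ℝ ∞ (g i)) ∧
      ∀ a b, f a - f b = ∑ i, g i (a, b) * (a i - b i) := by
  replace hf : ContDiff ℝ ∞ f := hf.of_le (by simp)
  set L : ((Fin n → ℝ) × (Fin n → ℝ)) × ℝ → (Fin n → ℝ) :=
    fun q => q.1.2 + q.2 • (q.1.1 - q.1.2) with hL_def
  have hL : ContDiff ℝ ∞ L := by
    apply ContDiff.add
    · exact contDiff_fst.snd
    · exact contDiff_snd.smul (contDiff_fst.fst.sub contDiff_fst.snd)
  have hH : ∀ i : Fin n, ContDiff ℝ ∞ fun q : ((Fin n → ℝ) × (Fin n → ℝ)) × ℝ =>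
      fderiv ℝ f (L q) (Pi.single i 1) := by
    intro i
    exact ((hf.fderiv_right (le_refl _)).comp hL).clm_apply contDiff_const
  refine ⟨fun i p => ∫ t in (0:ℝ)..1, fderiv ℝ f (L (p, t)) (Pi.single i 1), 
    fun i => contDiff_parametric_integral _ (hH i), ?_⟩
  intro a b
  have hγ : ∀ t : ℝ, HasDerivAt (fun s : ℝ => b + s • (a - b)) (a - b) t := by
    intro t
    simpa using ((hasDerivAt_id t).smul_const (a - b)).const_add b
  have hderiv : ∀ t ∈ Set.uIcc (0:ℝ) 1, HasDerivAt (fun s => f (b + s • (a - b)))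
      (fderiv ℝ f (b + t • (a - b)) (a - b)) t := by
    intro t _
    exact ((hf.differentiable (by simp) _).hasFDerivAt.comp_hasDerivAt t (hγ t))
  have hcont : Continuous fun t : ℝ => fderiv ℝ f (b + t • (a - b)) (a - b) := by
    have h1 : Continuous fun t : ℝ => fderiv ℝ f (b + t • (a - b)) :=
      (hf.continuous_fderiv (by simp)).comp
        (continuous_const.add (continuous_id.smul continuous_const))
    exact h1.clm_apply continuous_const
  have hint : IntervalIntegrable (fun t : ℝ => fderiv ℝ f (b + t • (a - b)) (a - b))
      volume 0 1 := hcont.intervalIntegrable 0 1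
  have ftc := intervalIntegral.integral_eq_sub_of_hasDerivAt hderiv hint
  simp only [one_smul, zero_smul, add_zero, add_sub_cancel] at ftc
  -- expand a - b as a sum of single vectors
  have hab : (a - b) = ∑ i, (a i - b i) • (Pi.single i 1 : Fin n → ℝ) := by
    funext j
    simp [Finset.sum_apply, Pi.single_apply, Finset.sum_ite_eq', mul_comm]
  have hlin : ∀ y : Fin n → ℝ, fderiv ℝ f y (a - b)
      = ∑ i, (fderiv ℝ f y (Pi.single i 1)) * (a i - b i) := by
    intro y
    rw [hab, map_sum]
    congr 1; funext i
    rw [(fderiv ℝ f y).map_smul, smul_eq_mul]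
    ring
  calc f a - f b = ∫ t in (0:ℝ)..1, fderiv ℝ f (b + t • (a - b)) (a - b) := ftc.symm
    _ = ∫ t in (0:ℝ)..1, ∑ i, (fderiv ℝ f (b + t • (a - b)) (Pi.single i 1)) * (a i - b i) := by
        apply intervalIntegral.integral_congr; intro t _; exact hlin _
    _ = ∑ i, ∫ t in (0:ℝ)..1, (fderiv ℝ f (b + t • (a - b)) (Pi.single i 1)) * (a i - b i) := by
        apply intervalIntegral.integral_finset_sum
        intro i _
        refine Continuous.intervalIntegrable ?_ 0 1
        have h1 : Continuous fun t : ℝ => fderiv ℝ f (b + t • (a - b)) :=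
          (hf.continuous_fderiv (by simp)).comp
            (continuous_const.add (continuous_id.smul continuous_const))
        exact (h1.clm_apply continuous_const).mul continuous_const
    _ = ∑ i, (∫ t in (0:ℝ)..1, fderiv ℝ f (L ((a, b), t)) (Pi.single i 1)) * (a i - b i) := by
        congr 1; funext i
        rw [intervalIntegral.integral_mul_const]



/-- **C∞-operations descend to quotients of `C∞(X)` by ideals** (Definition 2.3 of the paper).
If `X` is a smooth manifold, `I` an ideal of `C∞(X,ℝ)`, `f : ℝⁿ → ℝ` smooth, and
`cᵢ - c'ᵢ ∈ I` for all `i`, then the smooth function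
`x ↦ f (c₁ x, …, cₙ x) - f (c'₁ x, …, c'ₙ x)` lies in `I`; hence the induced `n`-fold
operation on `C∞(X,ℝ)/I` is well defined. -/
theorem cinf_ring_quotient_operation_wellDefined
    {E : Type*} [NormedAddCommGroup E] [NormedSpace ℝ E] [FiniteDimensional ℝ E]
    {X : Type*} [TopologicalSpace X] [ChartedSpace E X]
    [IsManifold (𝓘(ℝ, E)) (⊤ : ℕ∞) X] [T2Space X] [SecondCountableTopology X]
    (I : Ideal C^(⊤ : ℕ∞)⟮𝓘(ℝ, E), X; ℝ⟯)
    (n : ℕ) (f : (Fin n → ℝ) → ℝ) (hf : ContDiff ℝ (⊤ : ℕ∞) f)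
    (c c' : Fin n → C^(⊤ : ℕ∞)⟮𝓘(ℝ, E), X; ℝ⟯)
    (hcc' : ∀ i, c i - c' i ∈ I)
    (F : C^(⊤ : ℕ∞)⟮𝓘(ℝ, E), X; ℝ⟯)
    (hF : ∀ x : X, F x = f (fun i => c i x) - f (fun i => c' i x)) :
    F ∈ I := by
  obtain ⟨g, hg, hgab⟩ := hadamard n f hf
  have hc : ContMDiff (𝓘(ℝ, E)) (𝓘(ℝ, Fin n → ℝ)) (⊤ : ℕ∞) (fun x : X => fun i => c i x) :=
    contMDiff_pi_space.2 fun i => (c i).contMDiff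
  have hc' : ContMDiff (𝓘(ℝ, E)) (𝓘(ℝ, Fin n → ℝ)) (⊤ : ℕ∞) (fun x : X => fun i => c' i x) :=
    contMDiff_pi_space.2 fun i => (c' i).contMDiff
  let G : Fin n → C^(⊤ : ℕ∞)⟮𝓘(ℝ, E), X; ℝ⟯ := fun i =>
    ⟨fun x => g i (fun j => c j x, fun j => c' j x), ((hg i).contMDiff).comp (hc.prodMk_space hc')⟩
  have hFsum : F = ∑ i, G i * (c i - c' i) := by
    apply DFunLike.ext
    intro x
    rw [hF x, hgab]
    have := map_sum (ContMDiffMap.evalRingHom x) (fun i => G i * (c i - c' i)) Finset.univ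
    simp only [ContMDiffMap.evalRingHom] at this
    rw [show ((∑ i, G i * (c i - c' i)) : C^(⊤ : ℕ∞)⟮𝓘(ℝ, E), X; ℝ⟯) x
      = ∑ i, (G i * (c i - c' i)) x from this]
    simp [G, ContMDiffMap.coe_mul, ContMDiffMap.coe_sub]
    rfl
  rw [hFsum]
  exact Ideal.sum_mem I fun i _ => I.mul_mem_left _ (hcc' i)
end

section
/- Let Y be a nonempty smooth manifold (finite-dimensional, Hausdorff, second countable, without boundary). Then the map sending a point y ∈ Y to the evaluation map ev_y : C∞(Y,ℝ) → ℝ, ev_y(c) = c(y), is a bijection from Y onto the set of unital ℝ-algebra homomorphisms C∞(Y,ℝ) → ℝ. Equivalently, every unital ℝ-algebra homomorphism φ : C∞(Y,ℝ) → ℝ is evaluation at a unique point of Y. -/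
open scoped Manifold

variable {E : Type*} [NormedAddCommGroup E] [NormedSpace ℝ E] [FiniteDimensional ℝ E]
  {Y : Type*} [TopologicalSpace Y] [ChartedSpace E Y]
  [IsManifold (𝓘(ℝ, E)) (⊤ : ℕ∞) Y] [T2Space Y] [SecondCountableTopology Y]

/-- Evaluation at a point `y` of `Y`, as a unital `ℝ`-algebra homomorphism
`C∞(Y,ℝ) →ₐ[ℝ] ℝ`. -/
noncomputable def evalAlgHom (y : Y) : C^(⊤ : ℕ∞)⟮𝓘(ℝ, E), Y; ℝ⟯ →ₐ[ℝ] ℝ where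
  toFun c := c y
  map_one' := rfl
  map_mul' _ _ := rfl
  map_zero' := rfl
  map_add' _ _ := rfl
  commutes' _ := rfl

/-! Smooth Urysohn functions separate points, which gives injectivity. For surjectivity, if a
character `φ` were evaluation at no point, compactness would put into `ker φ` a finite sum of
squares positive on the compact sublevel set `{e ≤ φ e}` of a smooth exhaustion function `e`;
adding `(e - φ e)²` gives a nowhere vanishing, hence invertible, element of `ker φ`. -/

open Set
open scoped ContDiff

section SmoothFunctions

variable {F H M : Type*} [NormedAddCommGroup F] [NormedSpace ℝ F] [TopologicalSpace H]
  {I : ModelWithCorners ℝ F H} [TopologicalSpace M] [ChartedSpace H M] {n : ℕ∞}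

theorem ContMDiffMap.isUnit_of_forall_ne_zero {f : C^n⟮I, M; ℝ⟯} (hf : ∀ x, f x ≠ 0) :
    IsUnit f :=
  isUnit_iff_exists_inv.mpr
    ⟨⟨fun x => (f x)⁻¹, f.contMDiff.inv₀ hf⟩, ContMDiffMap.ext fun x => mul_inv_cancel₀ (hf x)⟩

theorem AlgHom.exists_map_eq_zero_apply_ne_zero (φ : C^n⟮I, M; ℝ⟯ →ₐ[ℝ] ℝ) {x : M}
    (hx : ∃ f : C^n⟮I, M; ℝ⟯, φ f ≠ f x) : ∃ f : C^n⟮I, M; ℝ⟯, φ f = 0 ∧ f x ≠ 0 := by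
  obtain ⟨f, hf⟩ := hx
  exact ⟨f - algebraMap ℝ _ (φ f), by simp, by simpa [← ContMDiffMap.coeFnAlgHom_apply,
    sub_eq_zero] using hf.symm⟩

theorem AlgHom.exists_map_eq_zero_pos_on_isCompact (φ : C^n⟮I, M; ℝ⟯ →ₐ[ℝ] ℝ)
    (hφ : ∀ x, ∃ f : C^n⟮I, M; ℝ⟯, φ f = 0 ∧ f x ≠ 0) {K : Set M} (hK : IsCompact K) :
    ∃ g : C^n⟮I, M; ℝ⟯, φ g = 0 ∧ (∀ x, 0 ≤ g x) ∧ ∀ x ∈ K, 0 < g x := by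
  choose f hf0 hfx using hφ
  obtain ⟨t, ht⟩ := hK.elim_finite_subcover (fun y => {x | f y x ≠ 0})
    (fun y => isOpen_ne_fun (f y).contMDiff.continuous continuous_const)
    (fun x _ => mem_iUnion.mpr ⟨x, hfx x⟩)
  have hg : ∀ x, (∑ y ∈ t, f y ^ 2 : C^n⟮I, M; ℝ⟯) x = ∑ y ∈ t, f y x ^ 2 := fun x => by
    simp [← ContMDiffMap.coeFnAlgHom_apply]
  refine ⟨∑ y ∈ t, f y ^ 2, by simp [hf0], fun x => ?_, fun x hx => ?_⟩
  · rw [hg]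
    positivity
  · obtain ⟨y, hyt, hy⟩ := mem_iUnion₂.mp (ht hx)
    rw [hg]
    exact Finset.sum_pos' (fun _ _ => sq_nonneg _) ⟨y, hyt, sq_pos_of_ne_zero hy⟩

variable [FiniteDimensional ℝ F] [IsManifold I ∞ M] [T2Space M] [SigmaCompactSpace M]

theorem ContMDiffMap.exists_apply_ne_apply {x y : M} (hxy : x ≠ y) :
    ∃ f : C^n⟮I, M; ℝ⟯, f x ≠ f y := by
  obtain ⟨f, hfx, hfy, -⟩ := exists_contMDiffMap_zero_one_of_isClosed (n := n) I
    isClosed_singleton isClosed_singleton (disjoint_singleton.mpr hxy)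
  exact ⟨f, by simp [hfx rfl, hfy rfl]⟩

/-- `K.find` (the index of the first compact of an exhaustion `K` containing a point) is locally
bounded, so a partition of unity yields a smooth function dominating it. -/
theorem ContMDiffMap.exists_isCompact_preimage_Iic :
    ∃ f : C^n⟮I, M; ℝ⟯, ∀ a, IsCompact (f ⁻¹' Iic a) := by
  have := Manifold.locallyCompact_of_finiteDimensional (M := M) I
  let K := CompactExhaustion.choice M
  obtain ⟨f, hf⟩ := exists_contMDiffMap_forall_mem_convex_of_local_const (n := n) I
    (t := fun x => Ici (K.find x : ℝ)) (fun _ => convex_Ici _) fun x =>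
      ⟨(K.find x + 1 : ℕ), Filter.eventually_of_mem (isOpen_interior.mem_nhds
        (K.subset_interior_succ _ (K.mem_find x))) fun y hy =>
          mem_Ici.mpr (mod_cast K.mem_iff_find_le.mp (interior_subset hy))⟩
  refine ⟨f, fun a => (K.isCompact ⌊a⌋₊).of_isClosed_subset
    (isClosed_Iic.preimage f.contMDiff.continuous) fun x hx => ?_⟩
  exact K.mem_iff_find_le.mpr (Nat.le_floor ((hf x).trans hx))

theorem AlgHom.exists_forall_eq_apply (φ : C^n⟮I, M; ℝ⟯ →ₐ[ℝ] ℝ) :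
    ∃ x, ∀ f : C^n⟮I, M; ℝ⟯, φ f = f x := by
  by_contra! h
  obtain ⟨e, he⟩ := ContMDiffMap.exists_isCompact_preimage_Iic (n := n) (I := I) (M := M)
  obtain ⟨g, hg0, hg_nonneg, hg_pos⟩ := φ.exists_map_eq_zero_pos_on_isCompact
    (fun x => φ.exists_map_eq_zero_apply_ne_zero (h x)) (he (φ e))
  set u : C^n⟮I, M; ℝ⟯ := g + (e - algebraMap ℝ _ (φ e)) ^ 2
  have hu : ∀ x, u x = g x + (e x - φ e) ^ 2 := fun x => by
    simp [u, ← ContMDiffMap.coeFnAlgHom_apply]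
  have hu_ne : ∀ x, u x ≠ 0 := fun x => by
    rw [hu]
    by_cases hx : e x ≤ φ e
    · exact (add_pos_of_pos_of_nonneg (hg_pos x hx) (sq_nonneg _)).ne'
    · exact (add_pos_of_nonneg_of_pos (hg_nonneg x)
        (pow_pos (sub_pos.mpr (not_le.mp hx)) 2)).ne'
  have hφu : φ u = 0 := by simp [u, hg0]
  exact ((ContMDiffMap.isUnit_of_forall_ne_zero hu_ne).map φ).ne_zero hφu

end SmoothFunctions

theorem bijective_evalAlgHom_general :
    Function.Bijective (fun y : Y => evalAlgHom (E := E) y) := by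
  have := Manifold.locallyCompact_of_finiteDimensional (M := Y) 𝓘(ℝ, E)
  refine ⟨fun x y hxy => ?_, fun φ => ?_⟩
  · by_contra hne
    obtain ⟨f, hf⟩ := ContMDiffMap.exists_apply_ne_apply (n := ⊤) (I := 𝓘(ℝ, E)) hne
    exact hf (DFunLike.congr_fun hxy f)
  · obtain ⟨x, hx⟩ := φ.exists_forall_eq_apply
    exact ⟨x, AlgHom.ext fun f => (hx f).symm⟩

/-- **Points of `Spec C∞(Y)` are points of `Y`** (Remark 2.7(i) of the paper).
For a nonempty smooth manifold `Y`, the map sending `y ∈ Y` to the evaluation homomorphism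
`ev_y : C∞(Y,ℝ) → ℝ` is a bijection onto the set of unital `ℝ`-algebra homomorphisms
`C∞(Y,ℝ) → ℝ`; i.e. every `ℝ`-algebra morphism `C∞(Y,ℝ) → ℝ` is evaluation at a unique
point of `Y`. -/
theorem bijective_evalAlgHom [Nonempty Y] :
    Function.Bijective (fun y : Y => evalAlgHom (E := E) y) :=
  bijective_evalAlgHom_general
end

section
/- Let X and Y be smooth manifolds (finite-dimensional, Hausdorff, second countable, without boundary). Call a map φ : C∞(Y,ℝ) → C∞(X,ℝ) a C∞-ring morphism if for every n ∈ ℕ, every smooth g : ℝⁿ → ℝ, and all c₁,…,cₙ ∈ C∞(Y,ℝ), one has φ(y ↦ g(c₁(y),…,cₙ(y))) = (x ↦ g(φ(c₁)(x),…,φ(cₙ)(x))). Then the pullback assignment f ↦ f* := (c ↦ c ∘ f) is a bijection from the set of smooth maps f : X → Y onto the set of C∞-ring morphisms C∞(Y,ℝ) → C∞(X,ℝ). -/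
open scoped Manifold
open Set Filter Topology

variable {E : Type*} [NormedAddCommGroup E] [NormedSpace ℝ E] [FiniteDimensional ℝ E]
  {E' : Type*} [NormedAddCommGroup E'] [NormedSpace ℝ E'] [FiniteDimensional ℝ E']
  {X : Type*} [TopologicalSpace X] [ChartedSpace E X]
  [IsManifold (𝓘(ℝ, E)) (⊤ : ℕ∞) X] [T2Space X] [SecondCountableTopology X]
  {Y : Type*} [TopologicalSpace Y] [ChartedSpace E' Y]
  [IsManifold (𝓘(ℝ, E')) (⊤ : ℕ∞) Y] [T2Space Y] [SecondCountableTopology Y]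

/-- Existence of a smooth exhaustion (proper) function on a manifold. -/
theorem exists_proper_smooth_aux :
    ∃ p : C^(⊤ : ℕ∞)⟮𝓘(ℝ, E'), Y; ℝ⟯, ∀ r : ℝ, IsCompact {y : Y | p y ≤ r} := by
  haveI : LocallyCompactSpace Y := ChartedSpace.locallyCompactSpace E' Y
  set K := CompactExhaustion.choice Y with hK
  set U : ℕ → Set Y := fun n => interior (K (n + 1)) with hU
  have hUopen : ∀ n, IsOpen (U n) := fun n => isOpen_interior
  have hUcover : (univ : Set Y) ⊆ ⋃ n, U n := by
    intro y _
    exact mem_iUnion.2 ⟨K.find y, K.subset_interior_succ _ (K.mem_find y)⟩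
  obtain ⟨ρ, hρ⟩ := SmoothPartitionOfUnity.exists_isSubordinate (𝓘(ℝ, E'))
    isClosed_univ U hUopen hUcover
  have hsmooth : ContMDiff (𝓘(ℝ, E')) (𝓘(ℝ, ℝ)) ((⊤ : ℕ∞) : WithTop ℕ∞) (fun y => ∑ᶠ n, ρ n y • (n : ℝ)) :=
    hρ.contMDiff_finsum_smul hUopen (fun n => contMDiffOn_const)
  refine ⟨⟨fun y => ∑ᶠ n, ρ n y • (n : ℝ), hsmooth⟩, fun r => ?_⟩
  set N : ℕ := ⌊r⌋₊ + 1 with hN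
  have hrN : r < (N : ℝ) := by
    have := Nat.lt_floor_add_one r
    push_cast [hN]
    linarith
  have hsub : {y : Y | (∑ᶠ n, ρ n y • (n : ℝ)) ≤ r} ⊆ K (N + 1) := by
    intro y hy
    by_contra hyK
    -- all ρ n y with n ≤ N vanish
    have hvanish : ∀ n, n ≤ N → ρ n y = 0 := by
      intro n hn
      by_contra h0
      have : y ∈ tsupport (ρ n) := subset_tsupport _ h0
      have : y ∈ K (n + 1) := interior_subset (hρ n this)
      exact hyK (K.subset (by omega) this)
    have hge : (N : ℝ) ≤ ∑ᶠ n, ρ n y • (n : ℝ) := by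
      rw [← ρ.sum_finsupport_smul_eq_finsum y (fun n _ => (n : ℝ))]
      have hsum1 : ∑ i ∈ ρ.finsupport y, ρ i y = 1 := ρ.sum_finsupport y (Set.mem_univ y)
      calc (N : ℝ) = ∑ i ∈ ρ.finsupport y, ρ i y * N := by
            rw [← Finset.sum_mul, hsum1, one_mul]
        _ ≤ ∑ i ∈ ρ.finsupport y, ρ i y • (i : ℝ) := by
            refine Finset.sum_le_sum fun i hi => ?_
            have hne : ρ i y ≠ 0 := by
              simpa [SmoothPartitionOfUnity.mem_finsupport] using hi
            have hiN : N < i := by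
              by_contra h
              exact hne (hvanish i (by omega))
            have : (N : ℝ) ≤ (i : ℝ) := by exact_mod_cast hiN.le
            simpa [smul_eq_mul] using mul_le_mul_of_nonneg_left this (ρ.nonneg i y)
    have : (N : ℝ) ≤ r := le_trans hge hy
    linarith
  refine (K.isCompact (N + 1)).of_isClosed_subset ?_ hsub
  exact isClosed_le hsmooth.continuous continuous_const

/-- A map `φ : C∞(Y,ℝ) → C∞(X,ℝ)` is a *C∞-ring morphism* if it commutes with all the
`n`-fold smooth operations: for every smooth `g : ℝⁿ → ℝ` and all `c₁, …, cₙ ∈ C∞(Y,ℝ)`,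
`φ (y ↦ g (c₁ y, …, cₙ y)) = (x ↦ g (φ c₁ x, …, φ cₙ x))`. -/
def IsCInfRingMorphism
    (φ : C^(⊤ : ℕ∞)⟮𝓘(ℝ, E'), Y; ℝ⟯ → C^(⊤ : ℕ∞)⟮𝓘(ℝ, E), X; ℝ⟯) : Prop :=
  ∀ (n : ℕ) (g : (Fin n → ℝ) → ℝ), ContDiff ℝ (⊤ : ℕ∞) g →
    ∀ (c : Fin n → C^(⊤ : ℕ∞)⟮𝓘(ℝ, E'), Y; ℝ⟯) (G : C^(⊤ : ℕ∞)⟮𝓘(ℝ, E'), Y; ℝ⟯),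
      (∀ y : Y, G y = g (fun i => c i y)) →
      ∀ x : X, φ G x = g (fun i => φ (c i) x)

theorem exists_point_aux
    (φ : C^(⊤ : ℕ∞)⟮𝓘(ℝ, E'), Y; ℝ⟯ → C^(⊤ : ℕ∞)⟮𝓘(ℝ, E), X; ℝ⟯)
    (hφ : IsCInfRingMorphism φ) (x : X) :
    ∃ y : Y, ∀ c : C^(⊤ : ℕ∞)⟮𝓘(ℝ, E'), Y; ℝ⟯, φ c x = c y := by
  haveI : LocallyCompactSpace Y := ChartedSpace.locallyCompactSpace E' Y
  obtain ⟨p, hp⟩ := exists_proper_smooth_aux (E' := E') (Y := Y)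
  set Z : C^(⊤ : ℕ∞)⟮𝓘(ℝ, E'), Y; ℝ⟯ → Set Y := fun c => {y | c y = φ c x} with hZdef
  have hZclosed : ∀ c, IsClosed (Z c) := fun c => isClosed_eq c.contMDiff.continuous continuous_const
  have hone : φ (ContMDiffMap.const 1) x = 1 :=
    hφ 0 (fun _ => 1) contDiff_const (fun i => i.elim0) (ContMDiffMap.const 1)
      (fun y => rfl) x
  have hFIP : ∀ u : Finset (C^(⊤ : ℕ∞)⟮𝓘(ℝ, E'), Y; ℝ⟯),
      ({y : Y | p y ≤ φ p x} ∩ ⋂ c ∈ u, Z c).Nonempty := by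
    intro u
    by_contra hempty
    rw [Set.not_nonempty_iff_eq_empty] at hempty
    set n := u.card with hn
    set e := u.equivFin.symm with he
    set c' : Fin (n + 1) → C^(⊤ : ℕ∞)⟮𝓘(ℝ, E'), Y; ℝ⟯ :=
      Fin.cons p (fun j => (e j : C^(⊤ : ℕ∞)⟮𝓘(ℝ, E'), Y; ℝ⟯)) with hc'
    set a : Fin (n + 1) → ℝ := fun i => φ (c' i) x with ha
    set g : (Fin (n + 1) → ℝ) → ℝ := fun v => ∑ i, (v i - a i) ^ 2 with hg
    have hgsmooth : ContDiff ℝ (⊤ : ℕ∞) g := by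
      refine ContDiff.sum fun i _ => ?_
      exact ((ContinuousLinearMap.proj (R := ℝ) (φ := fun _ : Fin (n+1) => ℝ) i).contDiff.sub
        contDiff_const).pow 2
    have hve : ContMDiff (𝓘(ℝ, E')) (𝓘(ℝ, Fin (n + 1) → ℝ)) ((⊤ : ℕ∞) : WithTop ℕ∞) (fun y i => c' i y) :=
      contMDiff_pi_space.mpr fun i => (c' i).contMDiff
    have hGsmooth : ContMDiff (𝓘(ℝ, E')) (𝓘(ℝ, ℝ)) ((⊤ : ℕ∞) : WithTop ℕ∞) (fun y => g (fun i => c' i y)) := by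
      show ContMDiff (𝓘(ℝ, E')) (𝓘(ℝ, ℝ)) ((⊤ : ℕ∞) : WithTop ℕ∞) (g ∘ (fun y i => c' i y))
      exact ContMDiff.comp (I' := 𝓘(ℝ, Fin (n + 1) → ℝ)) (hgsmooth.of_le (by simp)).contMDiff hve
    set G : C^(⊤ : ℕ∞)⟮𝓘(ℝ, E'), Y; ℝ⟯ := ⟨fun y => g (fun i => c' i y), hGsmooth⟩ with hG
    have hψG : φ G x = 0 := by
      have := hφ (n + 1) g hgsmooth c' G (fun y => rfl) x
      simpa [hg, ha] using this
    have hGne : ∀ y, G y ≠ 0 := by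
      intro y h0
      have hterm : ∀ i : Fin (n + 1), c' i y = a i := by
        intro i
        have hnonneg : ∀ j ∈ Finset.univ, (0:ℝ) ≤ (c' j y - a j) ^ 2 :=
          fun j _ => sq_nonneg _
        have := (Finset.sum_eq_zero_iff_of_nonneg hnonneg).1 h0 i (Finset.mem_univ i)
        have := sq_eq_zero_iff.1 this
        linarith
      have hy : y ∈ {y : Y | p y ≤ φ p x} ∩ ⋂ c ∈ u, Z c := by
        constructor
        · have := hterm 0
          simp only [hc', Fin.cons_zero] at this
          exact le_of_eq (this.trans (by simp [ha, hc']))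
        · refine Set.mem_iInter₂.2 fun c hc => ?_
          have := hterm (u.equivFin ⟨c, hc⟩).succ
          simp only [hc', Fin.cons_succ, he, Equiv.symm_apply_apply] at this
          have ha' : a (u.equivFin ⟨c, hc⟩).succ = φ c x := by
            simp [ha, hc', he]
          rw [ha'] at this
          exact this
      rw [hempty] at hy
      exact hy
    set Ginv : C^(⊤ : ℕ∞)⟮𝓘(ℝ, E'), Y; ℝ⟯ := ⟨fun y => (G y)⁻¹, G.contMDiff.inv₀ hGne⟩
    have hmul : φ (ContMDiffMap.const 1) x = φ G x * φ Ginv x := by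
      have hg2 : ContDiff ℝ (⊤ : ℕ∞) (fun v : Fin 2 → ℝ => v 0 * v 1) :=
        (ContinuousLinearMap.proj (R := ℝ) (φ := fun _ : Fin 2 => ℝ) 0).contDiff.mul
          (ContinuousLinearMap.proj (R := ℝ) (φ := fun _ : Fin 2 => ℝ) 1).contDiff
      have := hφ 2 (fun v => v 0 * v 1) hg2 ![G, Ginv] (ContMDiffMap.const 1)
        (fun y => by
          simp [ContMDiffMap.const]
          exact (mul_inv_cancel₀ (hGne y)).symm) x
      simpa using this
    rw [hone, hψG, zero_mul] at hmul
    exact one_ne_zero hmul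
  obtain ⟨y, hy⟩ := (hp (φ p x)).inter_iInter_nonempty Z hZclosed (by
    intro u
    exact hFIP u)
  exact ⟨y, fun c => (Set.mem_iInter.1 hy.2 c).symm⟩

theorem sep_point_aux {y₁ y₂ : Y} (h : y₁ ≠ y₂) :
    ∃ c : C^(⊤ : ℕ∞)⟮𝓘(ℝ, E'), Y; ℝ⟯, c y₁ ≠ c y₂ := by
  haveI : LocallyCompactSpace Y := ChartedSpace.locallyCompactSpace E' Y
  obtain ⟨c, h0, h1, -⟩ := exists_contMDiffMap_zero_one_of_isClosed (𝓘(ℝ, E'))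
    (isClosed_singleton (x := y₁)) (isClosed_singleton (x := y₂))
    (Set.disjoint_singleton.mpr h)
  refine ⟨c, ?_⟩
  have e0 : c y₁ = 0 := h0 rfl
  have e1 : c y₂ = 1 := h1 rfl
  rw [e0, e1]; norm_num

theorem detect_open_aux {U : Set Y} (hU : IsOpen U) {y₀ : Y} (hy : y₀ ∈ U) :
    ∃ c : C^(⊤ : ℕ∞)⟮𝓘(ℝ, E'), Y; ℝ⟯, c y₀ = 1 ∧ ∀ y, c y ≠ 0 → y ∈ U := by
  haveI : LocallyCompactSpace Y := ChartedSpace.locallyCompactSpace E' Y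
  obtain ⟨c, h0, h1, -⟩ := exists_contMDiffMap_zero_one_of_isClosed (𝓘(ℝ, E'))
    hU.isClosed_compl (isClosed_singleton (x := y₀))
    (Set.disjoint_compl_left_iff_subset.mpr (Set.singleton_subset_iff.mpr hy))
  refine ⟨c, h1 rfl, fun y hyne => ?_⟩
  by_contra hyU
  exact hyne (h0 hyU)

theorem cutoff_aux {U : Set Y} (hU : IsOpen U) {y₀ : Y} (hy : y₀ ∈ U) :
    ∃ ρ : C^(⊤ : ℕ∞)⟮𝓘(ℝ, E'), Y; ℝ⟯, tsupport ρ ⊆ U ∧ ∀ᶠ y in 𝓝 y₀, ρ y = 1 := by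
  haveI : LocallyCompactSpace Y := ChartedSpace.locallyCompactSpace E' Y
  haveI : NormalSpace Y := by
    haveI := Manifold.metrizableSpace (𝓘(ℝ, E')) Y
    letI := TopologicalSpace.metrizableSpaceMetric Y
    infer_instance
  obtain ⟨ρ, h0, h1, -⟩ := exists_contMDiffMap_zero_one_nhds_of_isClosed (𝓘(ℝ, E'))
    hU.isClosed_compl (isClosed_singleton (x := y₀))
    (Set.disjoint_compl_left_iff_subset.mpr (Set.singleton_subset_iff.mpr hy))
  obtain ⟨O, hOopen, hOsub, hOval⟩ := eventually_nhdsSet_iff_exists.mp h0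
  refine ⟨ρ, ?_, ?_⟩
  · have hsupp : Function.support ρ ⊆ Oᶜ := by
      intro y hyO
      simp only [Set.mem_compl_iff]
      intro hyO'
      exact hyO (hOval y hyO')
    have : tsupport ρ ⊆ Oᶜ := closure_minimal hsupp hOopen.isClosed_compl
    exact this.trans (Set.compl_subset_comm.mpr hOsub)
  · simpa [nhdsSet_singleton] using h1

theorem smooth_of_comp_aux {f0 : X → Y} (hcont : Continuous f0)
    (h : ∀ c : C^(⊤ : ℕ∞)⟮𝓘(ℝ, E'), Y; ℝ⟯,
      ContMDiff (𝓘(ℝ, E)) (𝓘(ℝ, ℝ)) ((⊤ : ℕ∞) : WithTop ℕ∞) (fun x => c (f0 x))) :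
    ContMDiff (𝓘(ℝ, E)) (𝓘(ℝ, E')) ((⊤ : ℕ∞) : WithTop ℕ∞) f0 := by
  intro x₀
  set y₀ := f0 x₀ with hy₀
  set e := extChartAt (𝓘(ℝ, E')) y₀ with he
  obtain ⟨ρ, hρsupp, hρ1⟩ := cutoff_aux (E' := E') (isOpen_extChartAt_source (I := 𝓘(ℝ, E')) y₀)
    (mem_extChartAt_source (I := 𝓘(ℝ, E')) y₀)
  set m := Module.finrank ℝ E' with hm
  set b := Module.finBasis ℝ E' with hb
  set L : Fin m → (E' →L[ℝ] ℝ) := fun i => LinearMap.toContinuousLinearMap (b.coord i) with hL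
  have hcsmooth : ∀ i, ContMDiff (𝓘(ℝ, E')) (𝓘(ℝ, ℝ)) ((⊤ : ℕ∞) : WithTop ℕ∞) (fun y => ρ y * L i (e y)) := by
    intro i y
    by_cases hyn : y ∈ e.source
    · have hy' : y ∈ (chartAt E' y₀).source := by
        rwa [he, extChartAt_source] at hyn
      exact (ρ.contMDiff y).mul
        ((((L i).contDiff.of_le le_top).contMDiff.contMDiffAt).comp y
          (contMDiffAt_extChartAt' (I := 𝓘(ℝ, E')) hy'))
    · have hopen : IsOpen (tsupport ρ)ᶜ := (isClosed_tsupport ρ).isOpen_compl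
      have hyT : y ∈ (tsupport ρ)ᶜ := fun hmem => hyn (hρsupp hmem)
      have hev : (fun y => ρ y * L i (e y)) =ᶠ[𝓝 y] (fun _ => (0 : ℝ)) := by
        filter_upwards [hopen.mem_nhds hyT] with z hz
        rw [image_eq_zero_of_notMem_tsupport hz, zero_mul]
      exact (contMDiffAt_const (c := (0:ℝ))).congr_of_eventuallyEq hev
  set c : Fin m → C^(⊤ : ℕ∞)⟮𝓘(ℝ, E'), Y; ℝ⟯ :=
    fun i => ⟨fun y => ρ y * L i (e y), hcsmooth i⟩ with hc
  set F : X → E' := fun x => ∑ i, (c i (f0 x)) • b i with hF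
  have hFsmooth : ContMDiff (𝓘(ℝ, E)) (𝓘(ℝ, E')) ((⊤ : ℕ∞) : WithTop ℕ∞) F := by
    refine contMDiff_finset_sum fun i _ => ?_
    exact (h (c i)).smul contMDiff_const
  have hev1 : ∀ᶠ x in 𝓝 x₀, ρ (f0 x) = 1 := hcont.continuousAt.eventually hρ1
  have hev2 : ∀ᶠ x in 𝓝 x₀, f0 x ∈ e.source :=
    hcont.continuousAt.preimage_mem_nhds
      ((isOpen_extChartAt_source y₀).mem_nhds (mem_extChartAt_source y₀))
  have hkey : ∀ᶠ x in 𝓝 x₀, f0 x = e.symm (F x) := by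
    filter_upwards [hev1, hev2] with x h1 h2
    have hFx : F x = e (f0 x) := by
      have : ∀ i, c i (f0 x) = b.repr (e (f0 x)) i := by
        intro i
        show ρ (f0 x) * L i (e (f0 x)) = _
        rw [h1, one_mul]
        simp [hL, Module.Basis.coord_apply]
      calc F x = ∑ i, (b.repr (e (f0 x)) i) • b i := by
            refine Finset.sum_congr rfl fun i _ => by rw [this i]
        _ = e (f0 x) := b.sum_repr _
    rw [hFx, e.left_inv h2]
  have hρ10 : ρ y₀ = 1 := hρ1.self_of_nhds
  have hFx₀ : F x₀ ∈ e.target := by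
    have h2 : (y₀ : Y) ∈ e.source := mem_extChartAt_source y₀
    have hFx : F x₀ = e y₀ := by
      have : ∀ i, c i (f0 x₀) = b.repr (e y₀) i := by
        intro i
        show ρ (f0 x₀) * L i (e (f0 x₀)) = _
        rw [← hy₀, hρ10, one_mul]
        simp [hL, Module.Basis.coord_apply]
      calc F x₀ = ∑ i, (b.repr (e y₀) i) • b i := by
            refine Finset.sum_congr rfl fun i _ => by rw [← hy₀, this i]
        _ = e y₀ := b.sum_repr _
    rw [hFx]
    exact e.map_source h2
  have hsymm : ContMDiffAt (𝓘(ℝ, E')) (𝓘(ℝ, E')) ((⊤ : ℕ∞) : WithTop ℕ∞) e.symm (F x₀) :=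
    (contMDiffOn_extChartAt_symm y₀).contMDiffAt
      ((isOpen_extChartAt_target y₀).mem_nhds hFx₀)
  exact ((hsymm.comp x₀ (hFsmooth x₀)).congr_of_eventuallyEq hkey)

/-- **The functor `X ↦ C∞(X)` is full and faithful** (Example 2.2 of the paper).
The pullback assignment `f ↦ f* = (c ↦ c ∘ f)` is a bijection from the set of smooth maps
`X → Y` onto the set of C∞-ring morphisms `C∞(Y,ℝ) → C∞(X,ℝ)`: every pullback is a
C∞-ring morphism, and every C∞-ring morphism is the pullback of a unique smooth map. -/
theorem pullback_bijection_onto_cinf_ring_morphisms :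
    (∀ f : C^(⊤ : ℕ∞)⟮𝓘(ℝ, E), X; 𝓘(ℝ, E'), Y⟯,
      IsCInfRingMorphism (fun c => c.comp f)) ∧
    (∀ φ : C^(⊤ : ℕ∞)⟮𝓘(ℝ, E'), Y; ℝ⟯ → C^(⊤ : ℕ∞)⟮𝓘(ℝ, E), X; ℝ⟯,
      IsCInfRingMorphism φ →
        ∃! f : C^(⊤ : ℕ∞)⟮𝓘(ℝ, E), X; 𝓘(ℝ, E'), Y⟯, φ = fun c => c.comp f) := by
  constructor
  · intro f n g hg c G hG x
    show (G.comp f) x = _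
    simp only [ContMDiffMap.comp_apply]
    rw [hG (f x)]
  · intro φ hφ
    choose f0 hf0 using exists_point_aux φ hφ
    have hcomp : ∀ c x, φ c x = c (f0 x) := fun c x => hf0 x c
    have hcont : Continuous f0 := by
      rw [continuous_iff_continuousAt]
      intro x₀
      rw [ContinuousAt, tendsto_nhds]
      intro U hUopen hmem
      obtain ⟨c, hc1, hcdet⟩ := detect_open_aux (E' := E') hUopen hmem
      have hca : ContinuousAt (φ c) x₀ := (φ c).contMDiff.continuous.continuousAt
      have hne : φ c x₀ ≠ 0 := by rw [hcomp c x₀, hc1]; norm_num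
      filter_upwards [hca.eventually_ne hne] with x hx
      exact hcdet _ (by rw [← hcomp c x]; exact hx)
    have hsm : ContMDiff (𝓘(ℝ, E)) (𝓘(ℝ, E')) ((⊤ : ℕ∞) : WithTop ℕ∞) f0 := by
      refine smooth_of_comp_aux hcont fun c => ?_
      have heq : (fun x => c (f0 x)) = fun x => φ c x := by
        funext x; rw [hcomp]
      rw [heq]
      exact (φ c).contMDiff
    refine ⟨⟨f0, hsm⟩, ?_, ?_⟩
    · funext c
      exact ContMDiffMap.ext fun x => hcomp c x
    · intro f' hf'
      refine ContMDiffMap.ext fun x => ?_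
      by_contra hne
      obtain ⟨c, hcne⟩ := sep_point_aux (E' := E') hne
      have h1 : φ c x = c (f' x) := by rw [hf']; rfl
      have h2 : φ c x = c (f0 x) := hcomp c x
      exact hcne (h1.symm.trans h2)
end
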